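/- Substituting the gamma-process Laplace exponent into the general EPPF formula recovers the CRP EPPF: ((-1)^{N-K}/(N-1)!) ∫_0^∞ λ^{N-1} e^{-Φ(λ)} ∏_{k=1}^K Φ^{(N_k)}(λ) dλ = θ^{K-1} (∏_k (N_k-1)!) / ∏_{m=1}^{N-1}(θ+m), where Φ(λ) = θ log((λ+ζ)/ζ). -/

import Mathlib

/-!
For `Φ(l) = θ log((l + ζ)/ζ)` one has `Φ^(n+1)(l) = (-1)^n n! θ / (l + ζ)^(n+1)` and
`e^(-Φ(l)) = ζ^θ (l + ζ)^(-θ)`, so with `n_k = N_k - 1` the integrand collapses to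
`(-1)^(N-K) θ^K (∏ n_k!) ζ^θ · l^(N-1) (l + ζ)^(-(θ + N))`. The remaining beta-prime integral
`∫₀^∞ l^p (l + ζ)^(-(s+p+1)) dl = p! ζ^(-s) / (s (s+1) ⋯ (s+p))` follows by induction on `p`,
integrating `d/dl [l^(p+1) (l + ζ)^(-(s+p+1))]` over `(0, ∞)`. The two signs `(-1)^(N-K)` cancel,
as do `ζ^θ ζ^(-θ)` and `(N-1)!`.
-/

open Finset MeasureTheory Filter Set
open scoped Nat Topology

section BetaPrime

variable {s ζ : ℝ}

theorem pow_mul_add_rpow_neg_le {l : ℝ} (hl : 0 ≤ l) (hζ : 0 < ζ) (p : ℕ) (a : ℝ) :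
    l ^ p * (l + ζ) ^ (-a) ≤ (l + ζ) ^ (p - a) := by
  have hlζ : 0 < l + ζ := by linarith
  calc l ^ p * (l + ζ) ^ (-a) ≤ (l + ζ) ^ p * (l + ζ) ^ (-a) := by
        gcongr
        linarith
    _ = (l + ζ) ^ (p - a) := by
        rw [← Real.rpow_natCast, ← Real.rpow_add hlζ, sub_eq_add_neg]

theorem tendsto_add_rpow_neg_atTop (hs : 0 < s) :
    Tendsto (fun l : ℝ => (l + ζ) ^ (-s)) atTop (𝓝 0) :=
  (tendsto_rpow_neg_atTop hs).comp (tendsto_atTop_add_const_right atTop ζ tendsto_id)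

theorem integrableOn_pow_mul_add_rpow_neg (hs : 0 < s) (hζ : 0 < ζ) (p : ℕ) :
    IntegrableOn (fun l : ℝ => l ^ p * (l + ζ) ^ (-(s + p + 1))) (Ioi 0) := by
  have hcont : ContinuousOn (fun l : ℝ => l ^ p * (l + ζ) ^ (-(s + p + 1))) (Ioi 0) :=
    (continuousOn_pow p).mul <| (continuousOn_id.add continuousOn_const).rpow_const
      fun l hl => Or.inl (by dsimp; linarith [mem_Ioi.mp hl])
  refine (integrableOn_add_rpow_Ioi_of_lt (a := -(s + 1)) (by linarith) (by linarith)).mono'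
    (hcont.aestronglyMeasurable measurableSet_Ioi) ?_
  filter_upwards [ae_restrict_mem measurableSet_Ioi] with l hl
  have hl : 0 < l := hl
  rw [Real.norm_of_nonneg (by positivity)]
  convert pow_mul_add_rpow_neg_le hl.le hζ p (s + p + 1) using 2
  ring

theorem integral_add_rpow_neg (hs : 0 < s) (hζ : 0 < ζ) :
    ∫ l in Ioi (0 : ℝ), (l + ζ) ^ (-(s + 1)) = ζ ^ (-s) / s := by
  have hderiv : ∀ l ∈ Ici (0 : ℝ),
      HasDerivAt (fun l => -(l + ζ) ^ (-s) / s) ((l + ζ) ^ (-(s + 1))) l := by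
    intro l hl
    have hlζ : l + ζ ≠ 0 := by linarith [mem_Ici.mp hl]
    refine (((hasDerivAt_id l).add_const ζ).rpow_const (p := -s) (Or.inl hlζ)).neg.div_const s
      |>.congr_deriv ?_
    rw [show -s - 1 = -(s + 1) by ring, id]
    field_simp
  have hlim : Tendsto (fun l : ℝ => -(l + ζ) ^ (-s) / s) atTop (𝓝 0) := by
    simpa using (tendsto_add_rpow_neg_atTop (ζ := ζ) hs).neg.div_const s
  have hint : IntegrableOn (fun l : ℝ => (l + ζ) ^ (-(s + 1))) (Ioi 0) := by
    simpa using integrableOn_pow_mul_add_rpow_neg hs hζ 0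
  rw [integral_Ioi_of_hasDerivAt_of_tendsto' hderiv hint hlim, zero_add]
  ring

theorem hasDerivAt_pow_succ_mul_add_rpow_neg (hζ : 0 < ζ) (p : ℕ) {l : ℝ} (hl : 0 ≤ l) :
    HasDerivAt (fun l : ℝ => l ^ (p + 1) * (l + ζ) ^ (-(s + p + 1)))
      ((p + 1) * (l ^ p * (l + ζ) ^ (-(s + p + 1)))
        - (s + p + 1) * (l ^ (p + 1) * (l + ζ) ^ (-(s + (p + 1 : ℕ) + 1)))) l := by
  have hlζ : l + ζ ≠ 0 := by positivity
  refine ((hasDerivAt_pow (p + 1) l).mul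
    (((hasDerivAt_id l).add_const ζ).rpow_const (p := -(s + p + 1)) (Or.inl hlζ))).congr_deriv ?_
  rw [show -(s + (p + 1 : ℕ) + 1) = -(s + p + 1) - 1 by push_cast; ring]
  simp only [id, Nat.cast_add, Nat.cast_one, add_tsub_cancel_right]
  ring

theorem integral_pow_succ_mul_add_rpow_neg (hs : 0 < s) (hζ : 0 < ζ) (p : ℕ) :
    ∫ l in Ioi (0 : ℝ), l ^ (p + 1) * (l + ζ) ^ (-(s + (p + 1 : ℕ) + 1))
      = (p + 1) / (s + p + 1) * ∫ l in Ioi (0 : ℝ), l ^ p * (l + ζ) ^ (-(s + p + 1)) := by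
  have hp := integrableOn_pow_mul_add_rpow_neg hs hζ p
  have hp' := integrableOn_pow_mul_add_rpow_neg hs hζ (p + 1)
  have hlim : Tendsto (fun l : ℝ => l ^ (p + 1) * (l + ζ) ^ (-(s + p + 1))) atTop (𝓝 0) := by
    refine tendsto_of_tendsto_of_tendsto_of_le_of_le' tendsto_const_nhds
      (tendsto_add_rpow_neg_atTop (ζ := ζ) hs) ?_ ?_
    all_goals filter_upwards [eventually_ge_atTop 0] with l hl
    · positivity
    · refine (pow_mul_add_rpow_neg_le hl hζ (p + 1) _).trans_eq ?_
      congr 1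
      push_cast
      ring
  have hftc := integral_Ioi_of_hasDerivAt_of_tendsto'
    (fun l hl => hasDerivAt_pow_succ_mul_add_rpow_neg (s := s) hζ p (mem_Ici.mp hl))
    ((hp.const_mul _).sub (hp'.const_mul _)) hlim
  rw [integral_sub (hp.const_mul _) (hp'.const_mul _), integral_const_mul, integral_const_mul]
    at hftc
  simp only [zero_pow p.succ_ne_zero, zero_mul, sub_zero] at hftc
  have hpos : 0 < s + p + 1 := by positivity
  rw [div_mul_eq_mul_div, eq_div_iff hpos.ne']
  linarith

theorem integral_pow_mul_add_rpow_neg (hs : 0 < s) (hζ : 0 < ζ) (p : ℕ) :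
    ∫ l in Ioi (0 : ℝ), l ^ p * (l + ζ) ^ (-(s + p + 1))
      = p ! * ζ ^ (-s) / (s * ∏ m ∈ Icc 1 p, (s + m)) := by
  induction p with
  | zero => simpa using integral_add_rpow_neg hs hζ
  | succ p ih =>
    have : 0 < s + p + 1 := by positivity
    have : 0 < ∏ m ∈ Icc 1 p, (s + m) := prod_pos fun m _ => by positivity
    rw [integral_pow_succ_mul_add_rpow_neg hs hζ p, ih, prod_Icc_succ_top (by omega),
      Nat.factorial_succ]
    push_cast
    field_simp
    ring

end BetaPrime

noncomputable def gammaLaplaceExponent (θ ζ l : ℝ) : ℝ := θ * Real.log ((l + ζ) / ζ)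

namespace gammaLaplaceExponent

variable {θ ζ : ℝ}

-- Also at `l = -ζ`, where both sides are `0`: `Real.deriv_log` holds for every `x`.
theorem deriv_eq (hζ : ζ ≠ 0) :
    deriv (gammaLaplaceExponent θ ζ) = fun l => θ * (l + ζ)⁻¹ := by
  ext l
  have hlog : deriv (fun l => Real.log (ζ⁻¹ * (l + ζ))) l = (l + ζ)⁻¹ := by
    rw [deriv_comp_add_const (fun y => Real.log (ζ⁻¹ * y)), deriv_comp_mul_left, Real.deriv_log,
      smul_eq_mul, mul_inv, inv_inv, inv_mul_cancel_left₀ hζ]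
  have hΦ : gammaLaplaceExponent θ ζ = fun l => θ * Real.log (ζ⁻¹ * (l + ζ)) := by
    ext l
    rw [gammaLaplaceExponent, div_eq_inv_mul]
  rw [hΦ, deriv_const_mul_field, hlog]

theorem iteratedDeriv_succ (hζ : ζ ≠ 0) (n : ℕ) (l : ℝ) :
    iteratedDeriv (n + 1) (gammaLaplaceExponent θ ζ) l
      = (-1) ^ n * n ! * θ / (l + ζ) ^ (n + 1) := by
  have h := congr_fun (iter_deriv_inv_linear n (1 : ℝ) ζ) l
  simp only [one_mul, one_pow, mul_one] at h
  rw [iteratedDeriv_succ', deriv_eq hζ, iteratedDeriv_const_mul_field, iteratedDeriv_eq_iterate,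
    h, show (-1 - n : ℤ) = -((n + 1 : ℕ) : ℤ) by push_cast; ring, zpow_neg, zpow_natCast]
  ring

theorem prod_iteratedDeriv_succ {ι : Type*} (hζ : ζ ≠ 0) (s : Finset ι) (n : ι → ℕ) (l : ℝ) :
    ∏ k ∈ s, iteratedDeriv (n k + 1) (gammaLaplaceExponent θ ζ) l
      = (-1) ^ (∑ k ∈ s, n k) * θ ^ #s * (∏ k ∈ s, ((n k)! : ℝ)) /
          (l + ζ) ^ (∑ k ∈ s, (n k + 1)) := by
  simp only [iteratedDeriv_succ hζ, prod_div_distrib, prod_mul_distrib, prod_pow_eq_pow_sum,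
    prod_const, mul_right_comm]

theorem exp_neg (hζ : 0 < ζ) {l : ℝ} (hl : 0 < l + ζ) :
    Real.exp (-gammaLaplaceExponent θ ζ l) = ζ ^ θ * (l + ζ) ^ (-θ) := by
  rw [gammaLaplaceExponent, ← neg_mul, mul_comm, ← Real.rpow_def_of_pos (div_pos hl hζ),
    Real.div_rpow hl.le hζ.le, Real.rpow_neg hζ.le, Real.rpow_neg hl.le, div_eq_mul_inv, inv_inv]
  ring

theorem setIntegral_pow_mul_exp_neg_mul_prod_iteratedDeriv {ι : Type*} (hζ : 0 < ζ)
    (s : Finset ι) (n : ι → ℕ) (p : ℕ) :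
    ∫ l in Ioi (0 : ℝ), l ^ p * Real.exp (-gammaLaplaceExponent θ ζ l) *
        ∏ k ∈ s, iteratedDeriv (n k + 1) (gammaLaplaceExponent θ ζ) l
      = (-1) ^ (∑ k ∈ s, n k) * θ ^ #s * (∏ k ∈ s, ((n k)! : ℝ)) * ζ ^ θ *
          ∫ l in Ioi (0 : ℝ), l ^ p * (l + ζ) ^ (-(θ + (∑ k ∈ s, (n k + 1) : ℕ))) := by
  rw [← integral_const_mul]
  refine setIntegral_congr_fun measurableSet_Ioi fun l hl => ?_
  have hlζ : 0 < l + ζ := by linarith [mem_Ioi.mp hl]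
  rw [exp_neg hζ hlζ, prod_iteratedDeriv_succ hζ.ne', Real.rpow_neg hlζ.le,
    Real.rpow_neg hlζ.le, Real.rpow_add hlζ, Real.rpow_natCast]
  field_simp

end gammaLaplaceExponent

/-- Substituting the gamma-process Laplace exponent `Φ(l) = θ log((l+ζ)/ζ)` into the
general subordinator EPPF formula recovers the CRP EPPF: with `N = ∑_k N_k`,
`((-1)^(N-K)/(N-1)!) ∫_0^∞ l^(N-1) e^(-Φ(l)) ∏_{k=1}^K Φ^(N_k)(l) dl
  = θ^(K-1) (∏_k (N_k-1)!) / ∏_{m=1}^{N-1}(θ+m)`. -/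
theorem gamma_subordinator_eppf_eq_crp (θ ζ : ℝ) (hθ : 0 < θ) (hζ : 0 < ζ)
    (K : ℕ) (hK : 1 ≤ K) (Ns : Fin K → ℕ) (hNs : ∀ k, 1 ≤ Ns k)
    (Φ : ℝ → ℝ) (hΦ : ∀ l, Φ l = θ * Real.log ((l + ζ) / ζ)) :
    ((-1 : ℝ) ^ ((∑ k, Ns k) - K) / (Nat.factorial ((∑ k, Ns k) - 1) : ℝ)) *
        ∫ l in Set.Ioi (0 : ℝ),
          l ^ ((∑ k, Ns k) - 1) * Real.exp (-Φ l) * ∏ k : Fin K, iteratedDeriv (Ns k) Φ l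
      = θ ^ (K - 1) * (∏ k : Fin K, ((Nat.factorial (Ns k - 1) : ℕ) : ℝ)) /
          ∏ m ∈ Finset.Icc 1 ((∑ k, Ns k) - 1), (θ + (m : ℝ)) := by
  obtain rfl : Φ = gammaLaplaceExponent θ ζ := funext hΦ
  obtain ⟨J, rfl⟩ : ∃ J, K = J + 1 := ⟨K - 1, by omega⟩
  obtain ⟨n, rfl⟩ : ∃ n : Fin (J + 1) → ℕ, Ns = fun k => n k + 1 :=
    ⟨fun k => Ns k - 1, funext fun k => (Nat.sub_add_cancel (hNs k)).symm⟩
  have hsum : ∑ k, (n k + 1) = ∑ k, n k + J + 1 := by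
    rw [sum_add_distrib, sum_const, card_univ, Fintype.card_fin, smul_eq_mul, mul_one, add_assoc]
  simp only [hsum, Nat.add_sub_cancel, Nat.add_sub_add_right]
  rw [gammaLaplaceExponent.setIntegral_pow_mul_exp_neg_mul_prod_iteratedDeriv hζ, hsum,
    Nat.cast_succ, ← add_assoc, integral_pow_mul_add_rpow_neg hθ hζ, card_univ, Fintype.card_fin,
    Real.rpow_neg hζ.le]
  have hsign : ((-1 : ℝ) ^ ∑ k, n k) ^ 2 = 1 := by
    rw [← pow_mul, mul_comm, pow_mul, neg_one_sq, one_pow]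
  field_simp
  rw [hsign]
  ring
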